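/- For a, b, c > 0 there exist constants δ > 0 and C ≥ 1 such that for every symmetric traceless real 3×3 matrix Q with dist(Q,𝒩) ≤ δ one has C⁻¹ · dist(Q,𝒩)² ≤ f_b(Q) ≤ C · dist(Q,𝒩)², i.e. near 𝒩 the bulk potential is comparable to the squared distance to 𝒩. -/

import Mathlib

open MeasureTheory Matrix Metric Filter
open scoped RealInnerProductSpace

noncomputable section

attribute [local instance] Matrix.frobeniusNormedAddCommGroup Matrix.frobeniusNormedSpace

/-- The space of real 3×3 matrices. -/
abbrev Mat3 := Matrix (Fin 3) (Fin 3) ℝ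

/-- Euclidean 3-space. -/
abbrev E3 := EuclideanSpace ℝ (Fin 3)

/-- The constant `s₊ = (b² + √(b⁴ + 24a²c²))/(4c²)`. -/
def sPlus (a b c : ℝ) : ℝ := (b ^ 2 + Real.sqrt (b ^ 4 + 24 * a ^ 2 * c ^ 2)) / (4 * c ^ 2)

/-- The matrix `n ⊗ n`, with entries `nᵢnⱼ`. -/
def outer (n : Fin 3 → ℝ) : Mat3 := fun i j => n i * n j

/-- The vacuum manifold `𝒩 = { s₊(n⊗n − (1/3)Id) : n ∈ S² }`. -/
def Nset (a b c : ℝ) : Set Mat3 :=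
  {Q | ∃ n : Fin 3 → ℝ, (∑ i, n i ^ 2) = 1 ∧
    Q = sPlus a b c • (outer n - (1 / 3 : ℝ) • (1 : Mat3))}

/-- Squared Frobenius norm `tr(AAᵀ) = ∑ᵢⱼ Aᵢⱼ²`. -/
def frobSq (A : Mat3) : ℝ := ∑ i, ∑ j, (A i j) ^ 2

/-- Frobenius norm. -/
def frob (A : Mat3) : ℝ := Real.sqrt (frobSq A)

/-- The additive normalization constant `C₀ = a²s₊²/3 + 2b²s₊³/27 − c²s₊⁴/9`. -/
def C0 (a b c : ℝ) : ℝ :=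
  a ^ 2 * (sPlus a b c) ^ 2 / 3 + 2 * b ^ 2 * (sPlus a b c) ^ 3 / 27
    - c ^ 2 * (sPlus a b c) ^ 4 / 9

/-- The bulk potential `f_b(Q)`. -/
def fb (a b c : ℝ) (Q : Mat3) : ℝ :=
  -(a ^ 2 / 2) * (Q * Q).trace - (b ^ 2 / 3) * (Q * Q * Q).trace
    + (c ^ 2 / 4) * ((Q * Q).trace) ^ 2 + C0 a b c

/-- Frobenius distance from `Q` to the manifold `𝒩`. -/
def distN (a b c : ℝ) (Q : Mat3) : ℝ := sInf {d : ℝ | ∃ N ∈ Nset a b c, d = frob (Q - N)}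

/-- Partial derivative `∂_α Q(x)` of a matrix-valued map. -/
def pd (Q : E3 → Mat3) (α : Fin 3) (x : E3) : Mat3 :=
  fderiv ℝ Q x (EuclideanSpace.single α 1)

/-- `|∇Q(x)|² = ∑_α |∂_αQ(x)|²` (Frobenius norms). -/
def gradSq (Q : E3 → Mat3) (x : E3) : ℝ := ∑ α, frobSq (pd Q α x)

/-- Radial derivative `(∂Q/∂r)(x) = ∑_α (x_α/|x|) ∂_αQ(x)`. -/
def radD (Q : E3 → Mat3) (x : E3) : Mat3 := ‖x‖⁻¹ • ∑ α, (x α) • pd Q α x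

/-- Componentwise Laplacian `ΔQ(x)`. -/
def lap (Q : E3 → Mat3) (x : E3) : Mat3 :=
  ∑ α, fderiv ℝ (fun y => pd Q α y) x (EuclideanSpace.single α 1)

/-- The Landau–de Gennes energy density `e_ε(Q) = ½|∇Q|² + ε⁻²f_b(Q)`. -/
def eDen (a b c ε : ℝ) (Q : E3 → Mat3) (x : E3) : ℝ :=
  gradSq Q x / 2 + (ε ^ 2)⁻¹ * fb a b c (Q x)

/-- `Q` is a local minimizer of `I_ε(·, U)`: its energy density is locally integrable on `U`
and it minimizes the energy on every bounded open `D` with closure in `U` among competitors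
with locally integrable energy density agreeing with `Q` outside a compact subset of `D`. -/
def IsLocalMinimizer (a b c ε : ℝ) (U : Set E3) (Q : E3 → Mat3) : Prop :=
  LocallyIntegrableOn (eDen a b c ε Q) U volume ∧
  ∀ D : Set E3, IsOpen D → Bornology.IsBounded D → closure D ⊆ U →
    ∀ V : E3 → Mat3, LocallyIntegrableOn (eDen a b c ε V) U volume →
      (∃ K : Set E3, K ⊆ D ∧ IsCompact K ∧ ∀ x ∈ U \ K, V x = Q x) →
      ∫ x in D, eDen a b c ε Q x ≤ ∫ x in D, eDen a b c ε V x

/-!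
Diagonalise `Q` and let `λ` be its largest eigenvalue. Since
`|Q − s₊(n⊗n − Id/3)|² = |Q|² − 2s₊ n·Qn + 2s₊²/3` for traceless symmetric `Q` and unit `n`, the
nearest point of `𝒩` comes from a top eigenvector, and
`dist(Q,𝒩)² = |Q|² − 2s₊λ + 2s₊²/3 = (3/2)x² + t` with `x = λ − 2s₊/3` and `t = |Q|² − 3λ²/2 ≥ 0`.
For traceless `Q`, `tr Q³ = 3λ³ − (3/2)λ|Q|²`, so `f_b` is a polynomial in `(x, t)`; the
critical-point equation `2c²s₊² = b²s₊ + 3a²` of the uniaxial potential turns it into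
`x²A(x) + tB(x) + c²t²/4` with `A(0) = s₊(4c²s₊ − b²)/4 > 0` and `B(0) = b²s₊/2 > 0`. Near
`x = 0` both coefficients stay within a factor `2` of their values at `0`, which gives the
two-sided bound.
-/

lemma sPlus_nonneg (a b c : ℝ) : 0 ≤ sPlus a b c := by
  unfold sPlus; positivity

lemma four_mul_sq_mul_sPlus (a b : ℝ) {c : ℝ} (hc : c ≠ 0) :
    4 * c ^ 2 * sPlus a b c = b ^ 2 + Real.sqrt (b ^ 4 + 24 * a ^ 2 * c ^ 2) := by
  rw [sPlus, mul_div_cancel₀ _ (by positivity)]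

lemma sq_lt_four_mul_sq_mul_sPlus {a c : ℝ} (b : ℝ) (ha : a ≠ 0) (hc : c ≠ 0) :
    b ^ 2 < 4 * c ^ 2 * sPlus a b c := by
  rw [four_mul_sq_mul_sPlus a b hc, lt_add_iff_pos_right]
  exact Real.sqrt_pos.2 (by positivity)

lemma sPlus_pos {a c : ℝ} (b : ℝ) (ha : a ≠ 0) (hc : c ≠ 0) : 0 < sPlus a b c :=
  pos_of_mul_pos_right ((sq_nonneg b).trans_lt (sq_lt_four_mul_sq_mul_sPlus b ha hc))
    (by positivity)

lemma two_mul_sq_mul_sPlus_sq (a b : ℝ) {c : ℝ} (hc : c ≠ 0) :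
    2 * c ^ 2 * sPlus a b c ^ 2 = b ^ 2 * sPlus a b c + 3 * a ^ 2 := by
  have hs := four_mul_sq_mul_sPlus a b hc
  have hr := Real.sq_sqrt (show 0 ≤ b ^ 4 + 24 * a ^ 2 * c ^ 2 by positivity)
  refine mul_left_cancel₀ (show 8 * c ^ 2 ≠ 0 by positivity) ?_
  linear_combination
    (4 * c ^ 2 * sPlus a b c + Real.sqrt (b ^ 4 + 24 * a ^ 2 * c ^ 2) - b ^ 2) * hs + hr

lemma sum_pow_three_of_sum_eq_zero {v : Fin 3 → ℝ} (hv : ∑ j, v j = 0) (i : Fin 3) :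
    ∑ j, v j ^ 3 = 3 * v i ^ 3 - 3 / 2 * v i * ∑ j, v j ^ 2 := by
  have hv2 : v 2 = -v 0 - v 1 := by rw [Fin.sum_univ_three] at hv; linarith
  fin_cases i <;>
    simp only [Fin.sum_univ_three, Fin.zero_eta, Fin.mk_one, Fin.reduceFinMk, Fin.isValue, hv2] <;>
    ring

lemma three_halves_mul_sq_le_sum_sq_of_sum_eq_zero {v : Fin 3 → ℝ} (hv : ∑ j, v j = 0)
    (i : Fin 3) : 3 / 2 * v i ^ 2 ≤ ∑ j, v j ^ 2 := by
  have hv2 : v 2 = -v 0 - v 1 := by rw [Fin.sum_univ_three] at hv; linarith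
  fin_cases i <;>
    simp only [Fin.sum_univ_three, Fin.zero_eta, Fin.mk_one, Fin.reduceFinMk, Fin.isValue, hv2] <;>
    nlinarith [sq_nonneg (v 0 - v 1), sq_nonneg (v 0 + 2 * v 1), sq_nonneg (2 * v 0 + v 1)]

namespace Matrix.IsHermitian

variable {n : Type*} [Fintype n] [DecidableEq n]

lemma trace_pow_eq_sum_eigenvalues_pow {𝕜 : Type*} [RCLike 𝕜] {A : Matrix n n 𝕜}
    (hA : A.IsHermitian) (k : ℕ) : (A ^ k).trace = ∑ i, (hA.eigenvalues i : 𝕜) ^ k := by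
  conv_lhs => rw [hA.spectral_theorem, ← map_pow, Unitary.conjStarAlgAut_apply, trace_mul_cycle,
    Unitary.coe_star_mul_self, one_mul, diagonal_pow, trace_diagonal]
  simp

lemma dotProduct_mulVec_le {A : Matrix n n ℝ} (hA : A.IsHermitian) {μ : ℝ}
    (hμ : ∀ i, hA.eigenvalues i ≤ μ) (v : n → ℝ) : v ⬝ᵥ A *ᵥ v ≤ μ * (v ⬝ᵥ v) := by
  set U : Matrix n n ℝ := (hA.eigenvectorUnitary : Matrix n n ℝ)
  set w := Uᵀ *ᵥ v
  have hconj (D : Matrix n n ℝ) : v ⬝ᵥ (U * D * Uᵀ) *ᵥ v = w ⬝ᵥ D *ᵥ w := by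
    rw [← mulVec_mulVec, ← mulVec_mulVec, dotProduct_mulVec, ← mulVec_transpose]
  have hA' : A = U * diagonal hA.eigenvalues * Uᵀ := by
    simpa [Unitary.conjStarAlgAut_apply, star_eq_conjTranspose] using hA.spectral_theorem
  have hU : U * Uᵀ = 1 := by
    simpa [star_eq_conjTranspose] using Unitary.coe_mul_star_self hA.eigenvectorUnitary
  have hvv : v ⬝ᵥ v = w ⬝ᵥ w := by simpa [hU] using hconj 1
  rw [hA', hconj, hvv, dotProduct, dotProduct, Finset.mul_sum]
  refine Finset.sum_le_sum fun i _ ↦ ?_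
  rw [mulVec_diagonal]
  nlinarith [hμ i, mul_self_nonneg (w i)]

end Matrix.IsHermitian

lemma frobSq_sub_uniaxial {Q : Mat3} (hQ : Q.IsSymm) (htr : Q.trace = 0) {n : Fin 3 → ℝ}
    (hn : ∑ i, n i ^ 2 = 1) (s : ℝ) :
    frobSq (Q - s • (outer n - (1 / 3 : ℝ) • 1)) =
      (Q * Q).trace - 2 * s * (n ⬝ᵥ Q *ᵥ n) + 2 * s ^ 2 / 3 := by
  rw [Fin.sum_univ_three] at hn
  rw [trace_fin_three] at htr
  simp only [frobSq, one_div, Matrix.sub_apply, Matrix.smul_apply, outer, one_apply, smul_eq_mul,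
    mul_ite, mul_one, mul_zero, Fin.sum_univ_three, Fin.isValue, ↓reduceIte, hQ.apply 1 0,
    zero_ne_one, sub_zero, hQ.apply 2 0, Fin.reduceEq, one_ne_zero, hQ.apply 2 1, trace,
    diag_apply, mul_apply, dotProduct, mulVec]
  linear_combination (2 * s / 3) * htr + s ^ 2 * (n 0 ^ 2 + n 1 ^ 2 + n 2 ^ 2 + 1 / 3) * hn

lemma distN_nonneg (a b c : ℝ) (Q : Mat3) : 0 ≤ distN a b c Q :=
  Real.sInf_nonneg fun _ ⟨_, _, hd⟩ ↦ hd ▸ Real.sqrt_nonneg _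

lemma distN_sq_eq (a b c : ℝ) {Q : Mat3} (hQ : Q.IsHermitian) (htr : Q.trace = 0) {i₀ : Fin 3}
    (hi₀ : ∀ i, hQ.eigenvalues i ≤ hQ.eigenvalues i₀) :
    distN a b c Q ^ 2 =
      (Q * Q).trace - 2 * sPlus a b c * hQ.eigenvalues i₀ + 2 * sPlus a b c ^ 2 / 3 := by
  set d := (Q * Q).trace - 2 * sPlus a b c * hQ.eigenvalues i₀ + 2 * sPlus a b c ^ 2 / 3
  have hQs : Q.IsSymm := isHermitian_iff_isSymm.1 hQ
  have hle : ∀ N ∈ Nset a b c, d ≤ frobSq (Q - N) := by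
    rintro _ ⟨n, hn, rfl⟩
    rw [frobSq_sub_uniaxial hQs htr hn]
    have hnn : n ⬝ᵥ n = 1 := by simpa [dotProduct, sq] using hn
    have hray := hQ.dotProduct_mulVec_le hi₀ n
    rw [hnn, mul_one] at hray
    have := mul_le_mul_of_nonneg_left hray (sPlus_nonneg a b c)
    simp only [d]
    linarith
  obtain ⟨N, hN, hNd⟩ : ∃ N ∈ Nset a b c, frobSq (Q - N) = d := by
    set n : Fin 3 → ℝ := ⇑(hQ.eigenvectorBasis i₀)
    have hn : ∑ i, n i ^ 2 = 1 := by
      rw [← EuclideanSpace.real_norm_sq_eq, hQ.eigenvectorBasis.orthonormal.1 i₀, one_pow]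
    refine ⟨_, ⟨n, hn, rfl⟩, ?_⟩
    have heig : n ⬝ᵥ Q *ᵥ n = hQ.eigenvalues i₀ := by simpa using (hQ.eigenvalues_eq i₀).symm
    rw [frobSq_sub_uniaxial hQs htr hn, heig]
  have hleast : IsLeast {d | ∃ N ∈ Nset a b c, d = frob (Q - N)} (Real.sqrt d) :=
    ⟨⟨N, hN, by rw [frob, hNd]⟩, fun _ ⟨N', hN', h⟩ ↦ h ▸ Real.sqrt_le_sqrt (hle N' hN')⟩
  have hd : 0 ≤ d := hNd ▸ Finset.sum_nonneg fun _ _ ↦ Finset.sum_nonneg fun _ _ ↦ sq_nonneg _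
  rw [distN, hleast.csInf_eq, Real.sq_sqrt hd]

lemma three_halves_mul_sq_eigenvalue_le_trace_mul_self {Q : Mat3} (hQ : Q.IsHermitian)
    (htr : Q.trace = 0) (i : Fin 3) : 3 / 2 * hQ.eigenvalues i ^ 2 ≤ (Q * Q).trace := by
  have hsum : ∑ j, hQ.eigenvalues j = 0 := by simpa [hQ.trace_eq_sum_eigenvalues] using htr
  rw [← sq, hQ.trace_pow_eq_sum_eigenvalues_pow 2]
  exact three_halves_mul_sq_le_sum_sq_of_sum_eq_zero hsum i

lemma fb_eq_of_eigenvalue (a b : ℝ) {c : ℝ} (hc : c ≠ 0) {Q : Mat3} (hQ : Q.IsHermitian)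
    (htr : Q.trace = 0) (i : Fin 3) {x t : ℝ}
    (hx : hQ.eigenvalues i = 2 * sPlus a b c / 3 + x)
    (ht : (Q * Q).trace = 3 / 2 * hQ.eigenvalues i ^ 2 + t) :
    fb a b c Q = x ^ 2 * (c ^ 2 * sPlus a b c ^ 2 - b ^ 2 * sPlus a b c / 4
        + (3 / 2 * c ^ 2 * sPlus a b c - b ^ 2 / 4) * x + 9 / 16 * c ^ 2 * x ^ 2)
      + t * (b ^ 2 * sPlus a b c / 2 + (b ^ 2 / 2 + c ^ 2 * sPlus a b c) * x
        + 3 / 4 * c ^ 2 * x ^ 2)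
      + c ^ 2 / 4 * t ^ 2 := by
  have hsum : ∑ j, hQ.eigenvalues j = 0 := by simpa [hQ.trace_eq_sum_eigenvalues] using htr
  have h2 : (Q * Q).trace = ∑ j, hQ.eigenvalues j ^ 2 := by
    simpa [sq] using hQ.trace_pow_eq_sum_eigenvalues_pow 2
  have h3 : (Q * Q * Q).trace = ∑ j, hQ.eigenvalues j ^ 3 := by
    simpa [pow_three'] using hQ.trace_pow_eq_sum_eigenvalues_pow 3
  rw [fb, C0, h3, sum_pow_three_of_sum_eq_zero hsum i, ← h2, ht, hx]
  linear_combination ((3 / 2 * (2 * sPlus a b c / 3 + x) ^ 2 + t) / 6 - sPlus a b c ^ 2 / 9) *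
    two_mul_sq_mul_sPlus_sq a b hc

theorem exists_two_sided_bound_of_continuousAt {A B : ℝ → ℝ} (hA : ContinuousAt A 0)
    (hB : ContinuousAt B 0) (hA₀ : 0 < A 0) (hB₀ : 0 < B 0) {k μ : ℝ} (hk : 0 ≤ k) (hμ : 0 < μ) :
    ∃ δ : ℝ, 0 < δ ∧ ∃ C : ℝ, 1 ≤ C ∧ ∀ x t : ℝ, 0 ≤ t → μ * x ^ 2 + t ≤ δ ^ 2 →
      C⁻¹ * (μ * x ^ 2 + t) ≤ x ^ 2 * A x + t * B x + k * t ^ 2 ∧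
      x ^ 2 * A x + t * B x + k * t ^ 2 ≤ C * (μ * x ^ 2 + t) := by
  have hev : ∀ᶠ x in nhds 0,
      A x ∈ Set.Icc (A 0 / 2) (2 * A 0) ∧ B x ∈ Set.Icc (B 0 / 2) (2 * B 0) :=
    (hA.eventually (Icc_mem_nhds (by linarith) (by linarith))).and
      (hB.eventually (Icc_mem_nhds (by linarith) (by linarith)))
  obtain ⟨ρ, hρ, hball⟩ := Metric.eventually_nhds_iff.1 hev
  set δ := Real.sqrt μ * ρ / 2
  have hδ : δ ^ 2 = μ * ρ ^ 2 / 4 := by rw [div_pow, mul_pow, Real.sq_sqrt hμ.le]; ring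
  set m := min (A 0 / (2 * μ)) (B 0 / 2)
  set M := max (2 * A 0 / μ) (2 * B 0 + k * δ ^ 2)
  have hm : 0 < m := lt_min (by positivity) (by positivity)
  refine ⟨δ, by positivity, max 1 (max M m⁻¹), le_max_left _ _, fun x t ht hxt ↦ ?_⟩
  have hx : dist x 0 < ρ := by
    rw [Real.dist_0_eq_abs]
    refine abs_lt_of_sq_lt_sq (lt_of_mul_lt_mul_left ?_ hμ.le) hρ.le
    linarith [mul_pos hμ (pow_pos hρ 2)]
  obtain ⟨⟨hAl, hAu⟩, ⟨hBl, hBu⟩⟩ := hball hx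
  have hkt : k * t ^ 2 ≤ k * δ ^ 2 * t := by
    have htδ : t ≤ δ ^ 2 := by linarith [mul_nonneg hμ.le (sq_nonneg x)]
    nlinarith [mul_le_mul_of_nonneg_left htδ (mul_nonneg hk ht)]
  have hlow : m * (μ * x ^ 2 + t) ≤ x ^ 2 * A x + t * B x + k * t ^ 2 := by
    have h1 : m * μ ≤ A 0 / 2 := by
      rw [← le_div_iff₀ hμ, div_div]; exact min_le_left _ _
    have h2 : m ≤ B 0 / 2 := min_le_right _ _
    nlinarith [sq_nonneg x, mul_nonneg hk (sq_nonneg t)]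
  have hup : x ^ 2 * A x + t * B x + k * t ^ 2 ≤ M * (μ * x ^ 2 + t) := by
    have h1 : 2 * A 0 ≤ M * μ := by
      rw [← div_le_iff₀ hμ]; exact le_max_left _ _
    have h2 : 2 * B 0 + k * δ ^ 2 ≤ M := le_max_right _ _
    nlinarith [sq_nonneg x, hkt]
  have hD : 0 ≤ μ * x ^ 2 + t := by positivity
  constructor
  · refine le_trans (mul_le_mul_of_nonneg_right ?_ hD) hlow
    exact inv_le_of_inv_le₀ hm ((le_max_right _ _).trans (le_max_right _ _))
  · exact hup.trans (mul_le_mul_of_nonneg_right ((le_max_left _ _).trans (le_max_right _ _)) hD)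

/-- near `𝒩`, the bulk potential is comparable to the squared distance to `𝒩`. -/
theorem stmt5 (a b c : ℝ) (ha : 0 < a) (hb : 0 < b) (hc : 0 < c) :
    ∃ δ : ℝ, 0 < δ ∧ ∃ C : ℝ, 1 ≤ C ∧
      ∀ Q : Mat3, Q.IsSymm → Q.trace = 0 → distN a b c Q ≤ δ →
        C⁻¹ * (distN a b c Q) ^ 2 ≤ fb a b c Q ∧ fb a b c Q ≤ C * (distN a b c Q) ^ 2 := by
  set s := sPlus a b c
  have hs : 0 < s := sPlus_pos b ha.ne' hc.ne'
  have hgap : b ^ 2 < 4 * c ^ 2 * s := sq_lt_four_mul_sq_mul_sPlus b ha.ne' hc.ne'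
  obtain ⟨δ, hδ, C, hC, hcomp⟩ := exists_two_sided_bound_of_continuousAt
    (A := fun x ↦ c ^ 2 * s ^ 2 - b ^ 2 * s / 4 + (3 / 2 * c ^ 2 * s - b ^ 2 / 4) * x
      + 9 / 16 * c ^ 2 * x ^ 2)
    (B := fun x ↦ b ^ 2 * s / 2 + (b ^ 2 / 2 + c ^ 2 * s) * x + 3 / 4 * c ^ 2 * x ^ 2)
    (by fun_prop) (by fun_prop) (by nlinarith) (by positivity) (k := c ^ 2 / 4)
    (by positivity) (show (0 : ℝ) < 3 / 2 by norm_num)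
  refine ⟨δ, hδ, C, hC, fun Q hQs htr hdist ↦ ?_⟩
  have hQ : Q.IsHermitian := isHermitian_iff_isSymm.2 hQs
  obtain ⟨i₀, hi₀⟩ := Finite.exists_max hQ.eigenvalues
  set x := hQ.eigenvalues i₀ - 2 * s / 3
  set t := (Q * Q).trace - 3 / 2 * hQ.eigenvalues i₀ ^ 2
  have ht : 0 ≤ t := sub_nonneg.2 (three_halves_mul_sq_eigenvalue_le_trace_mul_self hQ htr i₀)
  have hd : distN a b c Q ^ 2 = 3 / 2 * x ^ 2 + t := by
    rw [distN_sq_eq a b c hQ htr hi₀]; ring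
  rw [hd, fb_eq_of_eigenvalue a b hc.ne' hQ htr i₀ (x := x) (t := t) (by ring) (by ring)]
  exact hcomp x t ht (hd ▸ pow_le_pow_left₀ (distN_nonneg a b c Q) hdist 2)

end
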